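/- Let G be a Garside group, r a natural number, p, q ∈ ℤ^r, and a, c ∈ [p,q]. For v ∈ [p,q], let S_right(v) denote the set of ≼-minimal elements of {s ∈ S : s ≠ 1 and v^s ∈ [p,q]}, and let S_left(v) denote the set of ≽-minimal elements of {s ∈ S : s ≠ 1 and v^{s⁻¹} ∈ [p,q]}. Then the following are equivalent: (1) a and c are conjugate in G; (2) there exist l ∈ ℕ and tuples w₀ = c, w₁, …, w_l = a in [p,q] such that for each i < l, w_{i+1} = w_i^{s} for some s ∈ S_right(w_i); (3) there exist l ∈ ℕ and tuples w₀ = a, w₁, …, w_l = c in [p,q] such that for each i < l, w_{i+1} = w_i^{s⁻¹} for some s ∈ S_left(w_i). -/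

import Mathlib

/-- A Garside structure on a group `G`: a submonoid `G⁺` of positive elements
together with a Garside element `Δ`, satisfying the Garside axioms. -/
structure GarsideStructure (G : Type*) [Group G] where
  /-- the monoid `G⁺` of positive elements -/
  pos : Submonoid G
  /-- the Garside element `Δ` -/
  Δ : G
  delta_mem : Δ ∈ pos
  /-- `G⁺` is Noetherian -/
  noetherian : ∀ a ∈ pos, ∃ n : ℕ, ∀ l : List G,
    (∀ x ∈ l, x ∈ pos ∧ x ≠ 1) → l.prod = a → l.length ≤ n
  /-- any two elements of `G⁺` admit a least common right multiple (w.r.t. `≼`) -/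
  lcm_right : ∀ a ∈ pos, ∀ b ∈ pos, ∃ m ∈ pos,
    a⁻¹ * m ∈ pos ∧ b⁻¹ * m ∈ pos ∧
      ∀ c ∈ pos, a⁻¹ * c ∈ pos → b⁻¹ * c ∈ pos → m⁻¹ * c ∈ pos
  /-- any two elements of `G⁺` admit a least common left multiple (w.r.t. `≽`) -/
  lcm_left : ∀ a ∈ pos, ∀ b ∈ pos, ∃ m ∈ pos,
    m * a⁻¹ ∈ pos ∧ m * b⁻¹ ∈ pos ∧
      ∀ c ∈ pos, c * a⁻¹ ∈ pos → c * b⁻¹ ∈ pos → c * m⁻¹ ∈ pos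
  /-- `G` is the group of fractions of `G⁺` -/
  fractions : ∀ g : G, ∃ a ∈ pos, ∃ b ∈ pos, g = a⁻¹ * b
  /-- `Δ` is balanced: its left divisors in `G⁺` coincide with its right divisors -/
  balanced : ∀ s ∈ pos, (s⁻¹ * Δ ∈ pos ↔ Δ * s⁻¹ ∈ pos)
  /-- the set of simple elements (divisors of `Δ`) is finite -/
  simples_finite : {s : G | s ∈ pos ∧ s⁻¹ * Δ ∈ pos}.Finite
  /-- the simple elements generate `G⁺` -/
  simples_generate : Submonoid.closure {s : G | s ∈ pos ∧ s⁻¹ * Δ ∈ pos} = pos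

namespace GarsideStructure

variable {G : Type*} [Group G]

/-- `a ≼ b` : left divisibility. -/
def LeftDvd (Γ : GarsideStructure G) (a b : G) : Prop := a⁻¹ * b ∈ Γ.pos

/-- `b ≽ a` : right divisibility. -/
def RightDvd (Γ : GarsideStructure G) (b a : G) : Prop := b * a⁻¹ ∈ Γ.pos

/-- a simple element: a divisor of `Δ`. -/
def Simple (Γ : GarsideStructure G) (s : G) : Prop := s ∈ Γ.pos ∧ Γ.LeftDvd s Γ.Δ

/-- an atom of `G⁺`. -/
def Atom (Γ : GarsideStructure G) (a : G) : Prop :=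
  a ∈ Γ.pos ∧ a ≠ 1 ∧ ∀ b ∈ Γ.pos, ∀ c ∈ Γ.pos, a = b * c → b = 1 ∨ c = 1

/-- the iterated automorphism `τ^k`, where `τ(x) = Δ⁻¹xΔ`; so `τ^k(x) = Δ^(-k) x Δ^k`. -/
def tau (Γ : GarsideStructure G) (k : ℤ) (x : G) : G := Γ.Δ ^ (-k) * x * Γ.Δ ^ k

/-- `d` is the greatest common left divisor (`∧`) of `a` and `b`. -/
def IsLeftGcd (Γ : GarsideStructure G) (d a b : G) : Prop :=
  d ∈ Γ.pos ∧ Γ.LeftDvd d a ∧ Γ.LeftDvd d b ∧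
    ∀ c ∈ Γ.pos, Γ.LeftDvd c a → Γ.LeftDvd c b → Γ.LeftDvd c d

/-- `d` is the greatest common right divisor (`⋀̃`) of `a` and `b`. -/
def IsRightGcd (Γ : GarsideStructure G) (d a b : G) : Prop :=
  d ∈ Γ.pos ∧ Γ.RightDvd a d ∧ Γ.RightDvd b d ∧
    ∀ c ∈ Γ.pos, Γ.RightDvd a c → Γ.RightDvd b c → Γ.RightDvd d c

/-- membership of a tuple `a ∈ Gʳ` in the interval `[p,q]`:
`pᵢ ≤ inf aᵢ` (i.e. `Δ^pᵢ ≼ aᵢ`) and `sup aᵢ ≤ qᵢ` (i.e. `aᵢ ≼ Δ^qᵢ`) for all `i`. -/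
def InInterval (Γ : GarsideStructure G) {r : ℕ} (p q : Fin r → ℤ) (a : Fin r → G) : Prop :=
  ∀ i, Γ.LeftDvd (Γ.Δ ^ (p i)) (a i) ∧ Γ.LeftDvd (a i) (Γ.Δ ^ (q i))

/-- `‖a‖`: the maximal number of atoms in an expression of `a` as a product of atoms. -/
noncomputable def anorm (Γ : GarsideStructure G) (a : G) : ℕ :=
  sSup {n | ∃ l : List G, (∀ x ∈ l, Γ.Atom x) ∧ l.prod = a ∧ l.length = n}

end GarsideStructure

/-- The set of `≼`-minimal nontrivial simple elements `s` with `vˢ ∈ [p,q]`. -/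
def GarsideStructure.SRight {G : Type*} [Group G] (Γ : GarsideStructure G)
    {r : ℕ} (p q : Fin r → ℤ) (v : Fin r → G) : Set G :=
  {s | (Γ.Simple s ∧ s ≠ 1 ∧ Γ.InInterval p q (fun i => s⁻¹ * v i * s)) ∧
    ∀ t : G, (Γ.Simple t ∧ t ≠ 1 ∧ Γ.InInterval p q (fun i => t⁻¹ * v i * t)) →
      Γ.LeftDvd t s → t = s}

/-- The set of `≽`-minimal nontrivial simple elements `s` with `v^{s⁻¹} ∈ [p,q]`. -/
def GarsideStructure.SLeft {G : Type*} [Group G] (Γ : GarsideStructure G)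
    {r : ℕ} (p q : Fin r → ℤ) (v : Fin r → G) : Set G :=
  {s | (Γ.Simple s ∧ s ≠ 1 ∧ Γ.InInterval p q (fun i => s * v i * s⁻¹)) ∧
    ∀ t : G, (Γ.Simple t ∧ t ≠ 1 ∧ Γ.InInterval p q (fun i => t * v i * t⁻¹)) →
      Γ.RightDvd s t → t = s}


/-!
If `x⁻¹ a x = c`, then `y = Δ^m x⁻¹` is a positive element with `c^y = a` once `Δ^m` is central
and `m` is large, so it suffices to connect `v` and `v^y` for positive `y` with both tuples in
`[p,q]`. The positive `z` with `v^z ∈ [p,q]` are closed under left gcds, because each bound on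
`v^z` reads `z ≼ u φ(z)` for an automorphism `φ` of `G⁺` (conjugation by a power of `Δ`). As
`v^Δ ∈ [p,q]`, the gcd `y ∧ Δ` is then a nontrivial simple element with `v^(y ∧ Δ) ∈ [p,q]`; a
`≼`-minimal such divisor of it lies in `S_right(v)`, and we recurse on the shorter conjugator.
Condition (3) is condition (2) for the Garside structure `((G⁺)⁻¹, Δ⁻¹)`, which exchanges `≼`
with `≽` and `[p,q]` with `[-q,-p]`.
-/

open Relation Pointwise

theorem Relation.reflTransGen_iff_exists_fin_chain {α : Type*} {R : α → α → Prop} {a b : α} :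
    ReflTransGen R a b ↔ ∃ (l : ℕ) (w : Fin (l + 1) → α),
      w 0 = a ∧ w (Fin.last l) = b ∧ ∀ i : Fin l, R (w i.castSucc) (w i.succ) := by
  constructor
  · intro h
    induction h using ReflTransGen.head_induction_on with
    | refl => exact ⟨0, fun _ => b, rfl, rfl, Fin.elim0⟩
    | head hac _ ih =>
      obtain ⟨l, w, rfl, rfl, hw⟩ := ih
      exact ⟨l + 1, Fin.cons _ w, rfl, rfl, Fin.cases hac fun i => by simpa using hw i⟩
  · rintro ⟨l, w, rfl, rfl, hw⟩
    induction l with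
    | zero => exact .refl
    | succ l ih =>
      exact .head (hw 0) <|
        ih (fun i => w i.succ) fun i => by simpa [← Fin.succ_castSucc] using hw i.succ

theorem Relation.reflTransGen_iff_exists_fin_chain_of_invariant {α : Type*}
    {R : α → α → Prop} {P : α → Prop} (hP : ∀ u v, R u v → P v) {a b : α} (ha : P a) :
    ReflTransGen R a b ↔ ∃ (l : ℕ) (w : Fin (l + 1) → α),
      w 0 = a ∧ w (Fin.last l) = b ∧ (∀ i, P (w i)) ∧ ∀ i : Fin l, R (w i.castSucc) (w i.succ) := by
  rw [reflTransGen_iff_exists_fin_chain]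
  constructor
  · rintro ⟨l, w, h0, hl, hw⟩
    exact ⟨l, w, h0, hl, Fin.cases (h0 ▸ ha) fun i => hP _ _ (hw i), hw⟩
  · rintro ⟨l, w, h0, hl, -, hw⟩
    exact ⟨l, w, h0, hl, hw⟩

theorem exists_conj_tuple_comm {G : Type*} [Group G] {ι : Type*} (a c : ι → G) :
    (∃ x : G, ∀ i, x⁻¹ * a i * x = c i) ↔ ∃ x : G, ∀ i, x⁻¹ * c i * x = a i :=
  ⟨fun ⟨x, h⟩ => ⟨x⁻¹, fun i => by rw [← h i]; group⟩,
    fun ⟨x, h⟩ => ⟨x⁻¹, fun i => by rw [← h i]; group⟩⟩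

namespace GarsideStructure

variable {G : Type*} [Group G] (Γ : GarsideStructure G)

section Divisibility

variable {Γ}

theorem leftDvd_refl (a : G) : Γ.LeftDvd a a := by
  simp [LeftDvd]

theorem LeftDvd.trans {a b c : G} (hab : Γ.LeftDvd a b) (hbc : Γ.LeftDvd b c) :
    Γ.LeftDvd a c := by
  simpa [LeftDvd, mul_assoc] using Γ.pos.mul_mem hab hbc

theorem mem_pos_of_leftDvd {a b : G} (ha : a ∈ Γ.pos) (hab : Γ.LeftDvd a b) : b ∈ Γ.pos := by
  simpa using Γ.pos.mul_mem ha hab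

theorem leftDvd_map_iff (φ : G ≃* G) (hφ : ∀ x, φ x ∈ Γ.pos ↔ x ∈ Γ.pos) {a b : G} :
    Γ.LeftDvd (φ a) (φ b) ↔ Γ.LeftDvd a b := by
  rw [LeftDvd, LeftDvd, ← map_inv, ← map_mul, hφ]

end Divisibility

section Length

-- Like `anorm`, but counting factors in `G⁺ \ {1}` instead of atoms; the set is bounded
-- since `G⁺` is Noetherian.
noncomputable def length (a : G) : ℕ :=
  sSup {n | ∃ l : List G, (∀ x ∈ l, x ∈ Γ.pos ∧ x ≠ 1) ∧ l.prod = a ∧ l.length = n}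

variable {Γ}

theorem bddAbove_lengths {a : G} (ha : a ∈ Γ.pos) :
    BddAbove {n | ∃ l : List G, (∀ x ∈ l, x ∈ Γ.pos ∧ x ≠ 1) ∧ l.prod = a ∧ l.length = n} := by
  obtain ⟨n, hn⟩ := Γ.noetherian a ha
  exact ⟨n, by rintro _ ⟨l, hl, rfl, rfl⟩; exact hn l hl rfl⟩

theorem length_le_length_prod {l : List G} (hl : ∀ x ∈ l, x ∈ Γ.pos ∧ x ≠ 1) :
    l.length ≤ Γ.length l.prod :=
  le_csSup (bddAbove_lengths (Γ.pos.list_prod_mem fun x hx => (hl x hx).1)) ⟨l, hl, rfl, rfl⟩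

theorem exists_list_length_eq {a : G} (ha : a ∈ Γ.pos) :
    ∃ l : List G, (∀ x ∈ l, x ∈ Γ.pos ∧ x ≠ 1) ∧ l.prod = a ∧ l.length = Γ.length a := by
  refine Nat.sSup_mem ?_ (bddAbove_lengths ha)
  by_cases h : a = 1
  · exact ⟨0, [], by simp, by simp [h], rfl⟩
  · exact ⟨1, [a], by simp [ha, h], by simp, rfl⟩

theorem length_add_length_le {a b : G} (ha : a ∈ Γ.pos) (hb : b ∈ Γ.pos) :
    Γ.length a + Γ.length b ≤ Γ.length (a * b) := by
  obtain ⟨l₁, hl₁, rfl, h₁⟩ := exists_list_length_eq ha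
  obtain ⟨l₂, hl₂, rfl, h₂⟩ := exists_list_length_eq hb
  have := Γ.length_le_length_prod (l := l₁ ++ l₂) fun x hx =>
    (List.mem_append.mp hx).elim (hl₁ x) (hl₂ x)
  simp_all

theorem one_le_length {a : G} (ha : a ∈ Γ.pos) (h1 : a ≠ 1) : 1 ≤ Γ.length a := by
  simpa using Γ.length_le_length_prod (l := [a]) (by simpa using ⟨ha, h1⟩)

theorem length_one : Γ.length 1 = 0 := by
  have := length_add_length_le Γ.pos.one_mem Γ.pos.one_mem
  simp only [mul_one] at this
  omega

theorem eq_one_of_mem_of_inv_mem {u : G} (hu : u ∈ Γ.pos) (hu' : u⁻¹ ∈ Γ.pos) : u = 1 := by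
  by_contra h
  have := length_add_length_le hu hu'
  have := one_le_length hu h
  simp only [mul_inv_cancel, length_one] at *
  omega

theorem length_le_length_of_leftDvd {a b : G} (ha : a ∈ Γ.pos) (hab : Γ.LeftDvd a b) :
    Γ.length a ≤ Γ.length b := by
  have := length_add_length_le ha hab
  simp only [mul_inv_cancel_left] at this
  omega

theorem length_lt_length_of_leftDvd {a b : G} (ha : a ∈ Γ.pos) (hab : Γ.LeftDvd a b)
    (hne : a ≠ b) : Γ.length a < Γ.length b := by
  have := length_add_length_le ha hab
  have := one_le_length hab (by rwa [ne_eq, inv_mul_eq_one])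
  simp only [mul_inv_cancel_left] at *
  omega

theorem exists_minimal_leftDvd {P : G → Prop} {d : G} (hd : d ∈ Γ.pos) (hP : P d) :
    ∃ t ∈ Γ.pos, P t ∧ Γ.LeftDvd t d ∧ ∀ t' ∈ Γ.pos, P t' → Γ.LeftDvd t' t → t' = t := by
  obtain ⟨t, ⟨ht, hPt, htd⟩, hmin⟩ := (measure Γ.length).wf.has_min
    {t | t ∈ Γ.pos ∧ P t ∧ Γ.LeftDvd t d} ⟨d, hd, hP, leftDvd_refl d⟩
  refine ⟨t, ht, hPt, htd, fun t' ht' hPt' ht't => ?_⟩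
  by_contra hne
  exact hmin t' ⟨ht', hPt', ht't.trans htd⟩ (length_lt_length_of_leftDvd ht' ht't hne)

end Length

section Delta

theorem conj_mem_of_forall_simple (g : G) (h : ∀ s, Γ.Simple s → g * s * g⁻¹ ∈ Γ.pos) :
    ∀ x ∈ Γ.pos, g * x * g⁻¹ ∈ Γ.pos := by
  intro x hx
  rw [← Γ.simples_generate] at hx
  exact (Submonoid.closure_le (S := Γ.pos.comap (MulAut.conj g).toMonoidHom)).mpr
    (fun s hs => by simpa using h s hs) hx

-- Balancedness: conjugation by `Δ` and by `Δ⁻¹` maps simple elements into `G⁺`.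
theorem delta_mem_normalizer : Γ.Δ ∈ Subgroup.normalizer (Γ.pos : Set G) := by
  have hΔ := Γ.conj_mem_of_forall_simple Γ.Δ fun s ⟨hs, hsΔ⟩ => by
    have hu := (Γ.balanced s hs).mp hsΔ
    simpa [mul_assoc] using (Γ.balanced _ hu).mp (by simpa using hs)
  have hΔ' := Γ.conj_mem_of_forall_simple Γ.Δ⁻¹ fun s ⟨hs, hsΔ⟩ => by
    simpa [mul_assoc] using (Γ.balanced _ hsΔ).mpr (by simpa using hs)
  exact Subgroup.mem_set_normalizer_iff.mpr fun x =>
    ⟨hΔ x, fun hx => by simpa [mul_assoc] using hΔ' _ hx⟩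

theorem conj_delta_zpow_mem_iff (k : ℤ) (x : G) :
    MulAut.conj (Γ.Δ ^ k) x ∈ Γ.pos ↔ x ∈ Γ.pos :=
  ((Subgroup.zpow_mem _ Γ.delta_mem_normalizer k) x).symm

theorem simple_conj_delta_zpow (k : ℤ) {s : G} (hs : Γ.Simple s) :
    Γ.Simple (MulAut.conj (Γ.Δ ^ k) s) := by
  refine ⟨(Γ.conj_delta_zpow_mem_iff k s).mpr hs.1, ?_⟩
  convert (Γ.conj_delta_zpow_mem_iff k _).mpr hs.2 using 1
  simp only [LeftDvd, MulAut.conj_apply]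
  group

theorem exists_leftDvd_delta_pow {a : G} (ha : a ∈ Γ.pos) : ∃ n : ℕ, Γ.LeftDvd a (Γ.Δ ^ n) := by
  rw [← Γ.simples_generate] at ha
  induction ha using Submonoid.closure_induction with
  | mem s hs => exact ⟨1, by simpa [LeftDvd] using hs.2⟩
  | one => exact ⟨0, by simp [LeftDvd]⟩
  | mul x y _ _ hx hy =>
    obtain ⟨n, hn⟩ := hx
    obtain ⟨m, hm⟩ := hy
    refine ⟨n + m, ?_⟩
    convert Γ.pos.mul_mem hm ((Γ.conj_delta_zpow_mem_iff (-m) _).mpr hn) using 1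
    simp only [LeftDvd, MulAut.conj_apply]
    group

theorem eq_top_of_pos_le {H : Subgroup G} (h : Γ.pos ≤ H.toSubmonoid) : H = ⊤ := by
  refine (Subgroup.eq_top_iff' H).mpr fun g => ?_
  obtain ⟨a, ha, b, hb, rfl⟩ := Γ.fractions g
  exact H.mul_mem (H.inv_mem (h ha)) (h hb)

-- Conjugation by powers of `Δ` acts on the finite set of simple elements, so two powers act
-- alike; their quotient centralizes the simple elements, hence `G⁺` and `G`.
theorem exists_delta_pow_commute : ∃ e : ℕ, 0 < e ∧ ∀ g, Commute (Γ.Δ ^ e) g := by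
  have : Finite {s : G | Γ.Simple s} := Γ.simples_finite.to_subtype
  obtain ⟨k, k', hne, hkk'⟩ := Finite.exists_ne_map_eq_of_infinite
    fun (k : ℤ) (s : {s : G | Γ.Simple s}) =>
      (⟨MulAut.conj (Γ.Δ ^ k) s, Γ.simple_conj_delta_zpow k s.2⟩ : {s : G | Γ.Simple s})
  have hsimple : ∀ s, Γ.Simple s → Commute (Γ.Δ ^ (k - k')) s := fun s hs => by
    have h := congrArg Subtype.val (congrFun hkk' ⟨s, hs⟩)
    simp only [MulAut.conj_apply] at h
    calc Γ.Δ ^ (k - k') * s = Γ.Δ ^ (-k') * (Γ.Δ ^ k * s * (Γ.Δ ^ k)⁻¹) * Γ.Δ ^ k := by group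
      _ = Γ.Δ ^ (-k') * (Γ.Δ ^ k' * s * (Γ.Δ ^ k')⁻¹) * Γ.Δ ^ k := by rw [h]
      _ = s * Γ.Δ ^ (k - k') := by group
  have hcentral := Γ.eq_top_of_pos_le (H := Subgroup.centralizer {Γ.Δ ^ (k - k')}) <| by
    rw [← Γ.simples_generate, Submonoid.closure_le]
    exact fun s hs => Subgroup.mem_centralizer_singleton_iff.mpr (hsimple s hs).symm
  have hm : k - k' ≠ 0 := sub_ne_zero.mpr hne
  refine ⟨(k - k').natAbs * (k - k').natAbs, by positivity, fun g => ?_⟩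
  have hg : Commute (Γ.Δ ^ (k - k')) g :=
    (Subgroup.mem_centralizer_singleton_iff.mp (hcentral ▸ Subgroup.mem_top g)).symm
  rw [← zpow_natCast, Nat.cast_mul, Int.natAbs_mul_self', zpow_mul]
  exact hg.zpow_left _

theorem exists_central_delta_pow_mul_mem (x : G) :
    ∃ m : ℕ, (∀ g, Commute (Γ.Δ ^ m) g) ∧ Γ.Δ ^ m * x ∈ Γ.pos := by
  obtain ⟨e, he, hcomm⟩ := Γ.exists_delta_pow_commute
  obtain ⟨a, ha, b, hb, rfl⟩ := Γ.fractions x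
  obtain ⟨n, hn⟩ := Γ.exists_leftDvd_delta_pow ha
  refine ⟨e * n, fun g => by rw [pow_mul]; exact (hcomm g).pow_left n, ?_⟩
  have hna : Γ.Δ ^ n * a⁻¹ ∈ Γ.pos := by
    convert (Γ.conj_delta_zpow_mem_iff n _).mpr hn using 1
    simp only [MulAut.conj_apply, zpow_natCast]
    group
  rw [← pow_sub_mul_pow Γ.Δ (Nat.le_mul_of_pos_left n he), mul_assoc, ← mul_assoc (_ ^ n)]
  exact Γ.pos.mul_mem (Γ.pos.pow_mem Γ.delta_mem _) (Γ.pos.mul_mem hna hb)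

theorem exists_eq_mul_inv (g : G) : ∃ a ∈ Γ.pos, ∃ b ∈ Γ.pos, g = b * a⁻¹ := by
  obtain ⟨m, hcomm, hm⟩ := Γ.exists_central_delta_pow_mul_mem g
  exact ⟨_, Γ.pos.pow_mem Γ.delta_mem m, _, hm, by rw [(hcomm g).eq, mul_inv_cancel_right]⟩

end Delta

section Gcd

variable {Γ}

theorem exists_isLeftGcd {a b : G} (ha : a ∈ Γ.pos) (hb : b ∈ Γ.pos) :
    ∃ d, Γ.IsLeftGcd d a b := by
  set D := {d | d ∈ Γ.pos ∧ Γ.LeftDvd d a ∧ Γ.LeftDvd d b}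
  have hbdd : BddAbove (Γ.length '' D) :=
    ⟨Γ.length a, by rintro _ ⟨d, ⟨hd, hda, -⟩, rfl⟩; exact length_le_length_of_leftDvd hd hda⟩
  obtain ⟨d, ⟨hd, hda, hdb⟩, hdmax⟩ :=
    Nat.sSup_mem (Set.Nonempty.image _ (s := D)
      ⟨1, Γ.pos.one_mem, by simpa [LeftDvd] using ha, by simpa [LeftDvd] using hb⟩) hbdd
  refine ⟨d, hd, hda, hdb, fun c hc hca hcb => ?_⟩
  obtain ⟨m, hm, hdm, hcm, hmin⟩ := Γ.lcm_right d hd c hc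
  have hmD : m ∈ D := ⟨hm, hmin a ha hda hca, hmin b hb hdb hcb⟩
  have hmd : m = d := by
    by_contra hne
    have := length_lt_length_of_leftDvd hd hdm (Ne.symm hne)
    have := hdmax ▸ le_csSup hbdd ⟨m, hmD, rfl⟩
    omega
  exact hmd ▸ hcm

-- Write `w = α⁻¹β`; then `β ≼ α a` and `α ≼ α a`, so `lcm(α, β) ≼ α a`, likewise for `b`.
theorem IsLeftGcd.leftDvd_of_leftDvd {d a b w : G} (hd : Γ.IsLeftGcd d a b)
    (hwa : Γ.LeftDvd w a) (hwb : Γ.LeftDvd w b) : Γ.LeftDvd w d := by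
  obtain ⟨hd, hda, hdb, hmax⟩ := hd
  obtain ⟨α, hα, β, hβ, rfl⟩ := Γ.fractions w
  obtain ⟨m, hm, hαm, hβm, hmin⟩ := Γ.lcm_right α hα β hβ
  have key : ∀ h, Γ.LeftDvd d h → Γ.LeftDvd (α⁻¹ * β) h → Γ.LeftDvd (α⁻¹ * m) h := by
    intro h hdh hwh
    have hh := mem_pos_of_leftDvd hd hdh
    convert hmin (α * h) (Γ.pos.mul_mem hα hh) (by simpa using hh)
      (by simpa [LeftDvd, mul_assoc] using hwh) using 1
    simp only [LeftDvd]
    group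
  convert Γ.pos.mul_mem hβm (hmax _ hαm (key a hda hwa) (key b hdb hwb)) using 1
  simp only [LeftDvd]
  group

theorem IsLeftGcd.map {d a b : G} (hd : Γ.IsLeftGcd d a b) (φ : G ≃* G)
    (hφ : ∀ x, φ x ∈ Γ.pos ↔ x ∈ Γ.pos) : Γ.IsLeftGcd (φ d) (φ a) (φ b) := by
  obtain ⟨hd, hda, hdb, hmax⟩ := hd
  refine ⟨(hφ d).mpr hd, (leftDvd_map_iff φ hφ).mpr hda, (leftDvd_map_iff φ hφ).mpr hdb,
    fun c hc hca hcb => ?_⟩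
  obtain ⟨c, rfl⟩ := φ.surjective c
  rw [leftDvd_map_iff φ hφ] at hca hcb ⊢
  exact hmax c ((hφ c).mp hc) hca hcb

theorem IsLeftGcd.leftDvd_mul_map {d x y : G} (hd : Γ.IsLeftGcd d x y) (φ : G ≃* G)
    (hφ : ∀ z, φ z ∈ Γ.pos ↔ z ∈ Γ.pos) {u : G}
    (hx : Γ.LeftDvd x (u * φ x)) (hy : Γ.LeftDvd y (u * φ y)) : Γ.LeftDvd d (u * φ d) := by
  have hmul : ∀ a b, Γ.LeftDvd a (u * b) ↔ Γ.LeftDvd (u⁻¹ * a) b := fun a b => by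
    simp [LeftDvd, mul_assoc]
  exact (hmul _ _).mpr <| (hd.map φ hφ).leftDvd_of_leftDvd
    ((hmul _ _).mp (hd.2.1.trans hx)) ((hmul _ _).mp (hd.2.2.1.trans hy))

end Gcd

section Interval

variable {Γ} {r : ℕ} {p q : Fin r → ℤ}

theorem zpow_leftDvd_conj_iff (k : ℤ) (v z : G) :
    Γ.LeftDvd (Γ.Δ ^ k) (z⁻¹ * v * z) ↔
      Γ.LeftDvd z (v * Γ.Δ ^ (-k) * MulAut.conj (Γ.Δ ^ k) z) := by
  rw [LeftDvd, LeftDvd, ← Γ.conj_delta_zpow_mem_iff k, MulAut.conj_apply, MulAut.conj_apply,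
    show Γ.Δ ^ k * ((Γ.Δ ^ k)⁻¹ * (z⁻¹ * v * z)) * (Γ.Δ ^ k)⁻¹ =
      z⁻¹ * (v * Γ.Δ ^ (-k) * (Γ.Δ ^ k * z * (Γ.Δ ^ k)⁻¹)) by group]

theorem conj_leftDvd_zpow_iff (k : ℤ) (v z : G) :
    Γ.LeftDvd (z⁻¹ * v * z) (Γ.Δ ^ k) ↔
      Γ.LeftDvd z (v⁻¹ * Γ.Δ ^ k * MulAut.conj (Γ.Δ ^ (-k)) z) := by
  rw [LeftDvd, LeftDvd, MulAut.conj_apply,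
    show (z⁻¹ * v * z)⁻¹ * Γ.Δ ^ k =
      z⁻¹ * (v⁻¹ * Γ.Δ ^ k * (Γ.Δ ^ (-k) * z * (Γ.Δ ^ (-k))⁻¹)) by group]

-- Both bounds on `v^z` have the form `z ≼ u φ(z)` with `φ` conjugation by a power of `Δ`.
theorem inInterval_conj_of_isLeftGcd {d x y : G} {v : Fin r → G} (hd : Γ.IsLeftGcd d x y)
    (hx : Γ.InInterval p q fun i => x⁻¹ * v i * x)
    (hy : Γ.InInterval p q fun i => y⁻¹ * v i * y) :
    Γ.InInterval p q fun i => d⁻¹ * v i * d := by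
  intro i
  have hx := hx i
  have hy := hy i
  simp only [zpow_leftDvd_conj_iff, conj_leftDvd_zpow_iff] at hx hy ⊢
  exact ⟨hd.leftDvd_mul_map _ (Γ.conj_delta_zpow_mem_iff _) hx.1 hy.1,
    hd.leftDvd_mul_map _ (Γ.conj_delta_zpow_mem_iff _) hx.2 hy.2⟩

theorem inInterval_conj_delta {v : Fin r → G} (hv : Γ.InInterval p q v) :
    Γ.InInterval p q fun i => Γ.Δ⁻¹ * v i * Γ.Δ := by
  intro i
  constructor
  · convert (Γ.conj_delta_zpow_mem_iff (-1) _).mpr (hv i).1 using 1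
    simp only [LeftDvd, MulAut.conj_apply]
    group
  · convert (Γ.conj_delta_zpow_mem_iff (-1) _).mpr (hv i).2 using 1
    simp only [LeftDvd, MulAut.conj_apply]
    group

end Interval

section Chains

variable {Γ} {r : ℕ} {p q : Fin r → ℤ}

theorem exists_simple_leftDvd {a : G} (ha : a ∈ Γ.pos) (h1 : a ≠ 1) :
    ∃ s, Γ.Simple s ∧ s ≠ 1 ∧ Γ.LeftDvd s a := by
  rw [← Γ.simples_generate] at ha
  induction ha using Submonoid.closure_induction_left with
  | one => exact absurd rfl h1
  | mul_left s hs y hy ih =>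
    by_cases hs1 : s = 1
    · subst hs1
      simp only [one_mul] at h1 ⊢
      exact ih h1
    · exact ⟨s, hs, hs1, by simpa [LeftDvd, Γ.simples_generate] using hy⟩

theorem exists_mem_sRight_leftDvd {y : G} (hy : y ∈ Γ.pos) (hy1 : y ≠ 1) {v : Fin r → G}
    (hv : Γ.InInterval p q v) (hvy : Γ.InInterval p q fun i => y⁻¹ * v i * y) :
    ∃ t ∈ Γ.SRight p q v, Γ.LeftDvd t y := by
  obtain ⟨d, hd⟩ := exists_isLeftGcd hy Γ.delta_mem
  have hd1 : d ≠ 1 := by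
    obtain ⟨s, hs, hs1, hsy⟩ := exists_simple_leftDvd hy hy1
    rintro rfl
    exact hs1 (eq_one_of_mem_of_inv_mem hs.1 (by simpa [LeftDvd] using hd.2.2.2 s hs.1 hsy hs.2))
  obtain ⟨t, ht, ⟨ht1, htI⟩, htd, hmin⟩ :=
    exists_minimal_leftDvd (P := fun t => t ≠ 1 ∧ Γ.InInterval p q fun i => t⁻¹ * v i * t) hd.1
      ⟨hd1, inInterval_conj_of_isLeftGcd hd hvy (inInterval_conj_delta hv)⟩
  exact ⟨t, ⟨⟨⟨ht, htd.trans hd.2.2.1⟩, ht1, htI⟩,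
    fun t' ⟨ht', ht'1, ht'I⟩ => hmin t' ht'.1 ⟨ht'1, ht'I⟩⟩, htd.trans hd.2.1⟩

variable (Γ) in
def SRightStep (p q : Fin r → ℤ) (u v : Fin r → G) : Prop :=
  ∃ s ∈ Γ.SRight p q u, ∀ j, v j = s⁻¹ * u j * s

variable (Γ) in
def SLeftStep (p q : Fin r → ℤ) (u v : Fin r → G) : Prop :=
  ∃ s ∈ Γ.SLeft p q u, ∀ j, v j = s * u j * s⁻¹

theorem inInterval_of_sRightStep {u v : Fin r → G} (h : Γ.SRightStep p q u v) :
    Γ.InInterval p q v := by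
  obtain ⟨s, hs, hv⟩ := h
  rw [funext hv]
  exact hs.1.2.2

theorem inInterval_of_sLeftStep {u v : Fin r → G} (h : Γ.SLeftStep p q u v) :
    Γ.InInterval p q v := by
  obtain ⟨s, hs, hv⟩ := h
  rw [funext hv]
  exact hs.1.2.2

theorem exists_conj_of_reflTransGen_sRightStep {v w : Fin r → G}
    (h : ReflTransGen (Γ.SRightStep p q) v w) : ∃ y, ∀ i, y⁻¹ * v i * y = w i := by
  induction h using ReflTransGen.head_induction_on with
  | refl => exact ⟨1, by simp⟩
  | head hstep _ ih =>
    obtain ⟨s, -, hs⟩ := hstep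
    obtain ⟨y, hy⟩ := ih
    exact ⟨s * y, fun i => by rw [← hy, hs]; group⟩

theorem reflTransGen_sRightStep_conj {y : G} (hy : y ∈ Γ.pos) {v : Fin r → G}
    (hv : Γ.InInterval p q v) (hvy : Γ.InInterval p q fun i => y⁻¹ * v i * y) :
    ReflTransGen (Γ.SRightStep p q) v fun i => y⁻¹ * v i * y := by
  induction hn : Γ.length y using Nat.strong_induction_on generalizing y v with
  | _ n ih =>
  by_cases hy1 : y = 1
  · subst hy1
    simpa using ReflTransGen.refl
  obtain ⟨t, ht, hty⟩ := exists_mem_sRight_leftDvd hy hy1 hv hvy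
  have hlt : Γ.length (t⁻¹ * y) < n := by
    have := length_add_length_le ht.1.1.1 hty
    have := one_le_length ht.1.1.1 ht.1.2.1
    simp only [mul_inv_cancel_left] at *
    omega
  refine .head ⟨t, ht, fun j => rfl⟩ ?_
  simpa [mul_assoc] using
    ih _ hlt hty (v := fun i => t⁻¹ * v i * t) ht.1.2.2 (by simpa [mul_assoc] using hvy) rfl

theorem reflTransGen_sRightStep_iff {v w : Fin r → G} (hv : Γ.InInterval p q v)
    (hw : Γ.InInterval p q w) :
    ReflTransGen (Γ.SRightStep p q) v w ↔ ∃ y, ∀ i, y⁻¹ * v i * y = w i := by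
  refine ⟨exists_conj_of_reflTransGen_sRightStep, fun ⟨y, hy⟩ => ?_⟩
  obtain ⟨m, hcomm, hm⟩ := Γ.exists_central_delta_pow_mul_mem y
  have hw' : (fun i => (Γ.Δ ^ m * y)⁻¹ * v i * (Γ.Δ ^ m * y)) = w := funext fun i => by
    calc (Γ.Δ ^ m * y)⁻¹ * v i * (Γ.Δ ^ m * y)
        = y⁻¹ * ((Γ.Δ ^ m)⁻¹ * (v i * Γ.Δ ^ m)) * y := by group
      _ = w i := by rw [← (hcomm (v i)).eq, inv_mul_cancel_left, hy]
  exact hw' ▸ reflTransGen_sRightStep_conj hm hv (hw' ▸ hw)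

end Chains

section Inv

theorem inv_setOf_simple :
    {s : G | Γ.Simple s}⁻¹ = {s | s ∈ Γ.pos⁻¹ ∧ s⁻¹ * Γ.Δ⁻¹ ∈ Γ.pos⁻¹} := by
  ext s
  simp only [Set.mem_inv, Set.mem_ofPred_eq, Submonoid.mem_inv, Simple, LeftDvd, mul_inv_rev,
    inv_inv]
  exact and_congr_right fun hs => by simpa using Γ.balanced _ hs

def inv : GarsideStructure G where
  pos := Γ.pos⁻¹
  Δ := Γ.Δ⁻¹
  delta_mem := by simpa using Γ.delta_mem
  noetherian a ha := by
    obtain ⟨n, hn⟩ := Γ.noetherian a⁻¹ (Submonoid.mem_inv.mp ha)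
    refine ⟨n, fun l hl hprod => ?_⟩
    have hl' : ∀ x ∈ (l.map (·⁻¹)).reverse, x ∈ Γ.pos ∧ x ≠ 1 := by
      simp only [List.mem_reverse, List.mem_map]
      rintro _ ⟨x, hx, rfl⟩
      simpa using hl x hx
    simpa using hn _ hl' (by rw [← List.prod_inv_reverse, hprod])
  lcm_right a ha b hb := by
    obtain ⟨m, hm, ham, hbm, hmin⟩ := Γ.lcm_left a⁻¹ ha b⁻¹ hb
    refine ⟨m⁻¹, by simpa using hm, by simpa using ham, by simpa using hbm, fun c hc hac hbc => ?_⟩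
    simpa using hmin c⁻¹ hc (by simpa using hac) (by simpa using hbc)
  lcm_left a ha b hb := by
    obtain ⟨m, hm, ham, hbm, hmin⟩ := Γ.lcm_right a⁻¹ ha b⁻¹ hb
    refine ⟨m⁻¹, by simpa using hm, by simpa using ham, by simpa using hbm, fun c hc hac hbc => ?_⟩
    simpa using hmin c⁻¹ hc (by simpa using hac) (by simpa using hbc)
  fractions g := by
    obtain ⟨a, ha, b, hb, rfl⟩ := Γ.exists_eq_mul_inv g
    exact ⟨b⁻¹, by simpa using hb, a⁻¹, by simpa using ha, by simp⟩
  balanced s hs := by simpa using (Γ.balanced s⁻¹ hs).symm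
  simples_finite := by
    rw [← inv_setOf_simple]
    exact Γ.simples_finite.inv
  simples_generate := by
    rw [← inv_setOf_simple]
    exact (Submonoid.closure_inv _).trans (congrArg _ Γ.simples_generate)

variable {Γ} {r : ℕ}

theorem inv_leftDvd_iff {a b : G} : Γ.inv.LeftDvd a b ↔ Γ.RightDvd b⁻¹ a⁻¹ := by
  simp [LeftDvd, RightDvd, inv, Submonoid.mem_inv]

theorem inv_simple_iff {s : G} : Γ.inv.Simple s ↔ Γ.Simple s⁻¹ :=
  (Set.ext_iff.mp Γ.inv_setOf_simple s).symm

theorem inv_inInterval_iff {p q : Fin r → ℤ} {v : Fin r → G} :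
    Γ.inv.InInterval p q v ↔ Γ.InInterval (-q) (-p) v := by
  simp [InInterval, LeftDvd, inv, Submonoid.mem_inv, and_comm]

theorem mem_inv_sRight_iff {p q : Fin r → ℤ} {v : Fin r → G} {s : G} :
    s ∈ Γ.inv.SRight p q v ↔ s⁻¹ ∈ Γ.SLeft (-q) (-p) v := by
  simp only [SRight, SLeft, Set.mem_ofPred_eq, inv_simple_iff, inv_inInterval_iff,
    inv_leftDvd_iff, inv_inv, ne_eq, inv_eq_one]
  refine and_congr_right fun _ => (Equiv.inv G).forall_congr fun t => ?_
  simp [inv_eq_iff_eq_inv]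

theorem inv_sRightStep (p q : Fin r → ℤ) :
    Γ.inv.SRightStep p q = Γ.SLeftStep (-q) (-p) := by
  ext u v
  exact (Equiv.inv G).exists_congr fun s => by simp [mem_inv_sRight_iff]

theorem reflTransGen_sLeftStep_iff {p q : Fin r → ℤ} {v w : Fin r → G}
    (hv : Γ.InInterval p q v) (hw : Γ.InInterval p q w) :
    ReflTransGen (Γ.SLeftStep p q) v w ↔ ∃ y, ∀ i, y⁻¹ * v i * y = w i := by
  have h := Γ.inv.reflTransGen_sRightStep_iff (p := -q) (q := -p) (v := v) (w := w)
    (by rwa [inv_inInterval_iff, neg_neg, neg_neg]) (by rwa [inv_inInterval_iff, neg_neg, neg_neg])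
  rwa [inv_sRightStep, neg_neg, neg_neg] at h

end Inv

end GarsideStructure

/-- For `a, c ∈ [p,q]`, the following are equivalent: (1) `a` and `c` are conjugate;
(2) `a` is reachable from `c` inside `[p,q]` by conjugating with minimal simple
elements (from `SRight`); (3) `c` is reachable from `a` inside `[p,q]` by conjugating
with inverses of minimal simple elements (from `SLeft`). -/
theorem conjugate_iff_minimal_simple_chains {G : Type*} [Group G]
    (Γ : GarsideStructure G) (r : ℕ) (p q : Fin r → ℤ) (a c : Fin r → G)
    (ha : Γ.InInterval p q a) (hc : Γ.InInterval p q c) :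
    ((∃ x : G, ∀ i, x⁻¹ * a i * x = c i) ↔
      (∃ (l : ℕ) (w : Fin (l + 1) → Fin r → G),
        w 0 = c ∧ w (Fin.last l) = a ∧ (∀ i, Γ.InInterval p q (w i)) ∧
        ∀ i : Fin l, ∃ s ∈ Γ.SRight p q (w i.castSucc),
          ∀ j, w i.succ j = s⁻¹ * w i.castSucc j * s)) ∧
    ((∃ x : G, ∀ i, x⁻¹ * a i * x = c i) ↔
      (∃ (l : ℕ) (w : Fin (l + 1) → Fin r → G),
        w 0 = a ∧ w (Fin.last l) = c ∧ (∀ i, Γ.InInterval p q (w i)) ∧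
        ∀ i : Fin l, ∃ s ∈ Γ.SLeft p q (w i.castSucc),
          ∀ j, w i.succ j = s * w i.castSucc j * s⁻¹)) := by
  constructor
  · rw [exists_conj_tuple_comm, ← Γ.reflTransGen_sRightStep_iff hc ha]
    exact reflTransGen_iff_exists_fin_chain_of_invariant (R := Γ.SRightStep p q)
      (fun _ _ => GarsideStructure.inInterval_of_sRightStep) hc
  · rw [← Γ.reflTransGen_sLeftStep_iff ha hc]
    exact reflTransGen_iff_exists_fin_chain_of_invariant (R := Γ.SLeftStep p q)
      (fun _ _ => GarsideStructure.inInterval_of_sLeftStep) ha
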